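/- The Bessel operator B_λ(x_k) = (−λ + 2E)∂_k − x_k Δ maps the ideal ⟨R²⟩ generated by R² = ∑ β^{ij} x_i x_j into itself if and only if λ = 2 − m (working with polynomials in m commuting variables). -/

import Mathlib

open MvPolynomial

noncomputable section

/-- The lowered partial derivative `∂_j = ∑_i β_{ji} ∂^i`. -/
def dlow (m : ℕ) (g : Matrix (Fin m) (Fin m) ℂ) (j : Fin m)
    (p : MvPolynomial (Fin m) ℂ) : MvPolynomial (Fin m) ℂ :=
  ∑ i, g j i • pderiv i p

/-- The Euler operator `E = ∑_{i,j} β^{ij} x_i ∂_j`. -/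
def Eop (m : ℕ) (g : Matrix (Fin m) (Fin m) ℂ)
    (p : MvPolynomial (Fin m) ℂ) : MvPolynomial (Fin m) ℂ :=
  ∑ i, ∑ j, (g⁻¹ i j) • (X i * dlow m g j p)

/-- The Laplacian `Δ = ∑_{i,j} β^{ij} ∂_i ∂_j`. -/
def Lap (m : ℕ) (g : Matrix (Fin m) (Fin m) ℂ)
    (p : MvPolynomial (Fin m) ℂ) : MvPolynomial (Fin m) ℂ :=
  ∑ i, ∑ j, (g⁻¹ i j) • dlow m g i (dlow m g j p)

/-- The squared radial coordinate `R² = ∑_{i,j} β^{ij} x_i x_j`. -/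
def R2 (m : ℕ) (g : Matrix (Fin m) (Fin m) ℂ) : MvPolynomial (Fin m) ℂ :=
  ∑ i, ∑ j, (g⁻¹ i j) • (X i * X j)

/-- The Bessel operator `B(x_i) = (m − 2 + 2E)∂_i − x_i Δ` (parameter `λ = 2 − m`). -/
def Bop (m : ℕ) (g : Matrix (Fin m) (Fin m) ℂ) (i : Fin m)
    (p : MvPolynomial (Fin m) ℂ) : MvPolynomial (Fin m) ℂ :=
  ((m : ℂ) - 2) • dlow m g i p + (2 : ℂ) • Eop m g (dlow m g i p) - X i * Lap m g p

/-- The Bessel operator with general parameter `λ`: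
`B_λ(x_k) = (−λ + 2E)∂_k − x_k Δ`. -/
def Blam (m : ℕ) (g : Matrix (Fin m) (Fin m) ℂ) (lam : ℂ) (k : Fin m)
    (p : MvPolynomial (Fin m) ℂ) : MvPolynomial (Fin m) ℂ :=
  (-lam) • dlow m g k p + (2 : ℂ) • Eop m g (dlow m g k p) - X k * Lap m g p

/-!
Both `∂_k` and `E` are derivations, with `∂_k R² = 2 x_k`, `E x_k = x_k` and `E R² = 2 R²`,
and `Δ (R² p) = 2m p + 4 E p + R² Δ p`. Together these give
`B_λ(x_k)(R² p) = (4 - 2λ - 2m) x_k p + R² (B_λ(x_k) p + 4 ∂_k p)`,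
so `⟨R²⟩` is preserved iff `(4 - 2λ - 2m) x_k ∈ ⟨R²⟩`. Since `R²` is homogeneous of degree 2,
no nonzero multiple of `x_k` lies in `⟨R²⟩`.
-/

theorem Derivation.coe_finset_sum {R A M ι : Type*} [CommSemiring R] [CommSemiring A]
    [Algebra R A] [AddCommMonoid M] [Module A M] [Module R M] (s : Finset ι)
    (D : ι → Derivation R A M) : ⇑(∑ i ∈ s, D i) = ∑ i ∈ s, ⇑(D i) :=
  map_sum Derivation.coeFnAddMonoidHom D s

theorem Matrix.IsSymm.sum_inv_apply_mul_apply {n R : Type*} [Fintype n] [DecidableEq n]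
    [CommRing R] {A : Matrix n n R} (hA : A.IsSymm) (hd : IsUnit A.det) :
    ∑ i, ∑ j, A⁻¹ i j * A i j = Fintype.card n := by
  calc ∑ i, ∑ j, A⁻¹ i j * A i j = (A⁻¹ * A).trace := by
        simp only [Matrix.trace, Matrix.diag, Matrix.mul_apply, hA.apply]
    _ = Fintype.card n := by simp [Matrix.nonsing_inv_mul A hd]

theorem MvPolynomial.IsHomogeneous.coeff_mul_eq_zero {σ R : Type*} [CommSemiring R]
    {φ : MvPolynomial σ R} {n : ℕ} (hφ : φ.IsHomogeneous n) (ψ : MvPolynomial σ R)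
    {d : σ →₀ ℕ} (hd : d.degree < n) : coeff d (φ * ψ) = 0 := by
  classical
  rw [coeff_mul]
  refine Finset.sum_eq_zero fun x hx => ?_
  have hx_deg : x.1.degree + x.2.degree = d.degree := by
    rw [← map_add, Finset.HasAntidiagonal.mem_antidiagonal.mp hx]
  rw [hφ.coeff_eq_zero (by omega), zero_mul]

theorem MvPolynomial.IsHomogeneous.eq_zero_of_smul_X_mem_span {σ R : Type*} [CommSemiring R]
    {φ : MvPolynomial σ R} {n : ℕ} (hφ : φ.IsHomogeneous n) (hn : 1 < n) {c : R} {k : σ}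
    (h : c • X k ∈ Ideal.span {φ}) : c = 0 := by
  classical
  obtain ⟨ψ, hψ⟩ := Ideal.mem_span_singleton.mp h
  have hcoeff := congrArg (coeff (Finsupp.single k 1)) hψ
  rwa [coeff_smul, coeff_X, if_pos rfl, smul_eq_mul, mul_one,
    hφ.coeff_mul_eq_zero ψ (by rwa [Finsupp.degree_single])] at hcoeff

section

variable {m : ℕ} {g : Matrix (Fin m) (Fin m) ℂ}

def lowerPDeriv (g : Matrix (Fin m) (Fin m) ℂ) (k : Fin m) :
    Derivation ℂ (MvPolynomial (Fin m) ℂ) (MvPolynomial (Fin m) ℂ) :=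
  ∑ i, g k i • pderiv i

theorem coe_lowerPDeriv (k : Fin m) : ⇑(lowerPDeriv g k) = dlow m g k := by
  funext p
  simp [lowerPDeriv, dlow, Derivation.coe_finset_sum]

def eulerDerivation (g : Matrix (Fin m) (Fin m) ℂ) :
    Derivation ℂ (MvPolynomial (Fin m) ℂ) (MvPolynomial (Fin m) ℂ) :=
  ∑ i, ∑ j, (g⁻¹ i j • X i : MvPolynomial (Fin m) ℂ) • lowerPDeriv g j

theorem coe_eulerDerivation : ⇑(eulerDerivation g) = Eop m g := by
  funext p
  simp [eulerDerivation, Eop, Derivation.coe_finset_sum, coe_lowerPDeriv]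

theorem dlow_add (k : Fin m) (p q : MvPolynomial (Fin m) ℂ) :
    dlow m g k (p + q) = dlow m g k p + dlow m g k q := by
  rw [← coe_lowerPDeriv, map_add]

theorem dlow_smul (k : Fin m) (c : ℂ) (p : MvPolynomial (Fin m) ℂ) :
    dlow m g k (c • p) = c • dlow m g k p := by
  rw [← coe_lowerPDeriv, Derivation.map_smul]

theorem dlow_mul (k : Fin m) (p q : MvPolynomial (Fin m) ℂ) :
    dlow m g k (p * q) = dlow m g k p * q + p * dlow m g k q := by
  rw [← coe_lowerPDeriv, Derivation.leibniz, smul_eq_mul, smul_eq_mul, add_comm, mul_comm q]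

theorem dlow_X (k j : Fin m) : dlow m g k (X j) = C (g k j) := by
  simp [dlow, pderiv_X, Pi.single_apply, smul_eq_C_mul]

theorem Eop_add (p q : MvPolynomial (Fin m) ℂ) : Eop m g (p + q) = Eop m g p + Eop m g q := by
  rw [← coe_eulerDerivation, map_add]

theorem Eop_smul (c : ℂ) (p : MvPolynomial (Fin m) ℂ) : Eop m g (c • p) = c • Eop m g p := by
  rw [← coe_eulerDerivation, Derivation.map_smul]

theorem Eop_mul (p q : MvPolynomial (Fin m) ℂ) :
    Eop m g (p * q) = Eop m g p * q + p * Eop m g q := by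
  rw [← coe_eulerDerivation, Derivation.leibniz, smul_eq_mul, smul_eq_mul, add_comm, mul_comm q]

theorem Eop_X (hd : IsUnit g.det) (k : Fin m) : Eop m g (X k) = X k := by
  calc Eop m g (X k) = ∑ i, (g⁻¹ * g) i k • X i := by
        simp only [Eop, dlow_X, Matrix.mul_apply, Finset.sum_smul, smul_eq_C_mul, map_mul]
        exact Finset.sum_congr rfl fun i _ => Finset.sum_congr rfl fun j _ => by ring
    _ = X k := by simp [Matrix.nonsing_inv_mul g hd, Matrix.one_apply]

theorem dlow_R2 (hg : g.IsSymm) (hd : IsUnit g.det) (k : Fin m) :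
    dlow m g k (R2 m g) = (2 : ℂ) • X k := by
  calc dlow m g k (R2 m g) = ∑ i, (g * g⁻¹) k i • X i + ∑ j, (g * g⁻¹) k j • X j := by
        rw [R2, ← coe_lowerPDeriv]
        simp only [map_sum, Derivation.map_smul, Derivation.leibniz]
        simp only [coe_lowerPDeriv, dlow_X, smul_add, Finset.sum_add_distrib, smul_eq_mul]
        simp only [Matrix.mul_apply, Finset.sum_smul, smul_eq_C_mul, map_mul]
        rw [add_comm, Finset.sum_comm (f := fun i j => C (g⁻¹ i j) * (X j * C (g k i)))]
        congr 1 <;> refine Finset.sum_congr rfl fun i _ => Finset.sum_congr rfl fun j _ => ?_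
        · ring
        · rw [hg.inv.apply]; ring
    _ = (2 : ℂ) • X k := by simp [Matrix.mul_nonsing_inv g hd, Matrix.one_apply, two_smul]

theorem dlow_R2_mul (hg : g.IsSymm) (hd : IsUnit g.det) (k : Fin m)
    (p : MvPolynomial (Fin m) ℂ) :
    dlow m g k (R2 m g * p) = (2 : ℂ) • (X k * p) + R2 m g * dlow m g k p := by
  rw [dlow_mul, dlow_R2 hg hd, smul_mul_assoc]

theorem Eop_R2 (hg : g.IsSymm) (hd : IsUnit g.det) : Eop m g (R2 m g) = (2 : ℂ) • R2 m g := by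
  simp only [Eop, dlow_R2 hg hd, mul_smul_comm, smul_comm _ (2 : ℂ), ← Finset.smul_sum]
  rfl

theorem Lap_R2_mul (hg : g.IsSymm) (hd : IsUnit g.det) (p : MvPolynomial (Fin m) ℂ) :
    Lap m g (R2 m g * p) =
      (2 * m : ℂ) • p + (4 : ℂ) • Eop m g p + R2 m g * Lap m g p := by
  have hsecond (i j : Fin m) : dlow m g i (dlow m g j (R2 m g * p)) =
      (2 : ℂ) • (C (g i j) * p) + (2 : ℂ) • (X j * dlow m g i p)
        + (2 : ℂ) • (X i * dlow m g j p) + R2 m g * dlow m g i (dlow m g j p) := by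
    rw [dlow_R2_mul hg hd, dlow_add, dlow_smul, dlow_mul, dlow_X, dlow_R2_mul hg hd, smul_add]
    abel
  have htrace : ∑ i, ∑ j, g⁻¹ i j • (2 : ℂ) • (C (g i j) * p) = (2 * m : ℂ) • p := by
    have hcard : ∑ i, ∑ j, g⁻¹ i j * g i j = m := by
      simpa using hg.sum_inv_apply_mul_apply hd
    simp only [C_mul', smul_smul, ← Finset.sum_smul]
    simp only [mul_left_comm _ (2 : ℂ), ← Finset.mul_sum, hcard]
  have hswap : ∑ i, ∑ j, g⁻¹ i j • (2 : ℂ) • (X j * dlow m g i p) = (2 : ℂ) • Eop m g p := by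
    rw [Finset.sum_comm, Eop, Finset.smul_sum]
    refine Finset.sum_congr rfl fun i _ => ?_
    rw [Finset.smul_sum]
    exact Finset.sum_congr rfl fun j _ => by rw [hg.inv.apply, smul_comm]
  have heuler : ∑ i, ∑ j, g⁻¹ i j • (2 : ℂ) • (X i * dlow m g j p) = (2 : ℂ) • Eop m g p := by
    simp only [Eop, Finset.smul_sum, smul_comm (2 : ℂ)]
  have hlap : ∑ i, ∑ j, g⁻¹ i j • (R2 m g * dlow m g i (dlow m g j p)) =
      R2 m g * Lap m g p := by
    simp only [Lap, Finset.mul_sum, mul_smul_comm]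
  rw [Lap]
  simp only [hsecond, smul_add, Finset.sum_add_distrib, htrace, hswap, heuler, hlap]
  module

theorem isHomogeneous_R2 : (R2 m g).IsHomogeneous 2 :=
  IsHomogeneous.sum _ _ _ fun i _ => IsHomogeneous.sum _ _ _ fun j _ => by
    simpa [smul_eq_C_mul] using ((isHomogeneous_X ℂ i).mul (isHomogeneous_X ℂ j)).C_mul (g⁻¹ i j)

theorem Blam_R2_mul (hg : g.IsSymm) (hd : IsUnit g.det) (lam : ℂ) (k : Fin m)
    (p : MvPolynomial (Fin m) ℂ) :
    Blam m g lam k (R2 m g * p) = ((4 : ℂ) - 2 * lam - 2 * m) • (X k * p) +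
      R2 m g * (Blam m g lam k p + (4 : ℂ) • dlow m g k p) := by
  simp only [Blam, dlow_R2_mul hg hd, Lap_R2_mul hg hd, Eop_add, Eop_smul, Eop_mul, Eop_X hd,
    Eop_R2 hg hd]
  simp only [smul_eq_C_mul, map_sub, map_mul, map_neg, map_ofNat, map_natCast]
  ring

end

theorem stmt6 (m : ℕ) (hm : 2 ≤ m) (g : Matrix (Fin m) (Fin m) ℂ) (hg : g.IsSymm)
    (hd : IsUnit g.det) (lam : ℂ) :
    (∀ (k : Fin m) (p : MvPolynomial (Fin m) ℂ),
        Blam m g lam k (R2 m g * p) ∈ Ideal.span {R2 m g}) ↔ lam = 2 - (m : ℂ) := by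
  have hR2 : ∀ q, R2 m g * q ∈ Ideal.span {R2 m g} := fun q =>
    Ideal.mul_mem_right q _ (Ideal.mem_span_singleton_self _)
  constructor
  · intro h
    let k : Fin m := ⟨0, by omega⟩
    have hXk : ((4 : ℂ) - 2 * lam - 2 * m) • X k ∈ Ideal.span {R2 m g} := by
      have hk := h k 1
      rwa [Blam_R2_mul hg hd, mul_one, Ideal.add_mem_iff_left _ (hR2 _)] at hk
    linear_combination -isHomogeneous_R2.eq_zero_of_smul_X_mem_span one_lt_two hXk / 2
  · rintro rfl k p
    rw [Blam_R2_mul hg hd, show (4 : ℂ) - 2 * (2 - m) - 2 * m = 0 by ring, zero_smul, zero_add]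
    exact hR2 _
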